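/- arXiv:1803.09378 — 4 statements merged into one kernel-verified Lean document; each statement's English description precedes it below -/
import Mathlib

section
/- Let C be a small category equipped with a Grothendieck topology J, T a small category, and τ : C ⥤ T a functor. Then the category Mod^T of Linton models is closed under all small limits computed in Psh(T) (so in particular Mod^T has all small limits, created by the inclusion Mod^T ↪ Psh(T)), and Mod^T has all small colimits. -/
open CategoryTheory CategoryTheory.Limits

universe u v w w'

/-- The Mathlib (December 2024) notion, removed since: `P` is closed under limits of shape `J`. -/
def ClosedUnderLimitsOfShape {C : Type u} [Category.{v} C] (J : Type w) [Category.{w'} J]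
    (P : C → Prop) : Prop :=
  ∀ ⦃F : J ⥤ C⦄ ⦃c : Cone F⦄ (_hc : IsLimit c), (∀ j, P (F.obj j)) → P c.pt

/-!
By the adjunction `τ_! ⊣ τ^*`, a presheaf `M` on `T` is orthogonal to `τ_!(S ↪ yoneda c)` iff
`τ^* M` is orthogonal to `S ↪ yoneda c`, which is the sheaf condition for the sieve `S`. So
`Mod^T` is the orthogonality class of a small set of morphisms of `Psh(T)`. Such a class is
closed under limits, and since `Psh(T)` is locally presentable, the orthogonal-reflection
construction makes it reflective, hence cocomplete.
-/

namespace CategoryTheory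

lemma ObjectProperty.IsClosedUnderLimitsOfShape.closedUnderLimitsOfShape {C : Type u}
    [Category.{v} C] {P : ObjectProperty C} {S : Type w} [Category.{w'} S]
    [P.IsClosedUnderLimitsOfShape S] : ClosedUnderLimitsOfShape S P :=
  fun _ _ hc hF => P.prop_of_isLimit hc hF

lemma exists_isCardinalPresentable_forall {C : Type u} [Category.{v} C] {ι : Type*}
    [Small.{w} ι] (X : ι → C) [∀ i, IsPresentable.{w} (X i)] :
    ∃ (κ : Cardinal.{w}) (_ : Fact κ.IsRegular), ∀ i, IsCardinalPresentable (X i) κ := by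
  choose κ hκ hX using fun i =>
    Functor.IsAccessible.exists_cardinal (F := coyoneda.obj (.op (X i)))
  obtain ⟨κ', hκ', hlt⟩ :=
    HasCardinalLT.exists_regular_cardinal_forall.{w} fun i => (κ i).ord.ToType
  have : Fact κ'.IsRegular := ⟨hκ'⟩
  refine ⟨κ', inferInstance, fun i => ?_⟩
  have hle : κ i ≤ κ' := le_of_lt (by simpa [hasCardinalLT_iff_cardinal_mk_lt] using hlt i)
  exact isCardinalPresentable_monotone C hle _ (hX i)

namespace MorphismProperty

variable {C : Type u} [Category.{v} C]

lemma isRightAdjoint_ι_isLocal_of_isLocallyPresentable (W : MorphismProperty C)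
    [IsLocallyPresentable.{w} C] [W.IsSmall.{w}] : W.isLocal.ι.IsRightAdjoint := by
  obtain ⟨_, _, _⟩ := IsLocallyPresentable.exists_cardinal.{w} C
  obtain ⟨κ, _, hκ⟩ := exists_isCardinalPresentable_forall
    (Sum.elim (fun f : W.toSet => f.1.left) (fun f : W.toSet => f.1.right))
  exact isRightAdjoint_ι_isLocal W κ fun X Y f hf =>
    ⟨hκ (.inl ⟨.mk f, hf⟩), hκ (.inr ⟨.mk f, hf⟩)⟩

lemma isLocal_ofHoms_iff {ι : Type*} {X Y : ι → C} (f : ∀ i, X i ⟶ Y i) (Z : C) :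
    (ofHoms f).isLocal Z ↔ ∀ i, Function.Bijective fun g : Y i ⟶ Z => f i ≫ g :=
  ⟨fun h i => h _ (.mk i), fun h _ _ _ ⟨i⟩ => h i⟩

end MorphismProperty

lemma Adjunction.isLocal_ofHoms_map_iff {C : Type u} [Category.{v} C] {D : Type*} [Category D]
    {F : C ⥤ D} {G : D ⥤ C} (adj : F ⊣ G) {ι : Type*} {X Y : ι → C} (f : ∀ i, X i ⟶ Y i)
    (Z : D) :
    (MorphismProperty.ofHoms fun i => F.map (f i)).isLocal Z ↔
      (MorphismProperty.ofHoms f).isLocal (G.obj Z) := by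
  simp only [MorphismProperty.isLocal_ofHoms_iff]
  refine forall_congr' fun i => ?_
  have : (fun g => F.map (f i) ≫ g) =
      (adj.homEquiv (X i) Z).symm ∘ (fun g => f i ≫ g) ∘ adj.homEquiv (Y i) Z := by
    funext g
    simp [← adj.homEquiv_naturality_left]
  rw [this, Equiv.comp_bijective, Equiv.bijective_comp]

lemma Presieve.isSheaf_iff_isLocal_ofHoms_functorInclusion {C : Type u} [Category.{v} C]
    (J : GrothendieckTopology C) (P : Cᵒᵖ ⥤ Type v) :
    Presieve.IsSheaf J P ↔
      (MorphismProperty.ofHoms fun S : Σ X, J.Cover X => S.2.1.functorInclusion).isLocal P := by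
  simp only [MorphismProperty.isLocal_ofHoms_iff, Function.bijective_iff_existsUnique]
  exact ⟨fun h S => isSheafFor_iff_yonedaSheafCondition.1 (h _ S.2.2),
    fun h X S hS => isSheafFor_iff_yonedaSheafCondition.2 (h ⟨X, S, hS⟩)⟩

abbrev GrothendieckTopology.lanCoveringSieveInclusions {C : Type u} [SmallCategory C]
    (J : GrothendieckTopology C) {T : Type u} [SmallCategory T] (τ : C ⥤ T) :
    MorphismProperty (Tᵒᵖ ⥤ Type u) :=
  .ofHoms fun S : Σ X, J.Cover X => τ.op.lan.map S.2.1.functorInclusion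

lemma GrothendieckTopology.isSheaf_op_comp_iff_isLocal {C : Type u} [SmallCategory C]
    (J : GrothendieckTopology C) {T : Type u} [SmallCategory T] (τ : C ⥤ T)
    (M : Tᵒᵖ ⥤ Type u) :
    Presieve.IsSheaf J (τ.op ⋙ M) ↔ (J.lanCoveringSieveInclusions τ).isLocal M :=
  (Presieve.isSheaf_iff_isLocal_ofHoms_functorInclusion J _).trans
    ((τ.op.lanAdjunction (Type u)).isLocal_ofHoms_map_iff _ M).symm

end CategoryTheory

/-- For a Linton theory `τ : C ⥤ T` over a site `(C, J)`, the category of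
Linton models is closed under all small limits computed in the presheaf category `Psh(T)`,
has all small limits (created by the full inclusion), and has all small colimits. -/
theorem linton_models_complete_cocomplete {C : Type u} [SmallCategory C]
    (J : GrothendieckTopology C) {T : Type u} [SmallCategory T] (τ : C ⥤ T) :
    (∀ (S : Type u) (_ : SmallCategory S),
      ClosedUnderLimitsOfShape S (fun M : Tᵒᵖ ⥤ Type u => Presieve.IsSheaf J (τ.op ⋙ M))) ∧
    HasLimits (ObjectProperty.FullSubcategory (fun M : Tᵒᵖ ⥤ Type u => Presieve.IsSheaf J (τ.op ⋙ M))) ∧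
    Nonempty (CreatesLimits (ObjectProperty.ι
      (fun M : Tᵒᵖ ⥤ Type u => Presieve.IsSheaf J (τ.op ⋙ M)))) ∧
    HasColimits (ObjectProperty.FullSubcategory (fun M : Tᵒᵖ ⥤ Type u => Presieve.IsSheaf J (τ.op ⋙ M))) := by
  set W := J.lanCoveringSieveInclusions τ
  rw [show (fun M : Tᵒᵖ ⥤ Type u => Presieve.IsSheaf J (τ.op ⋙ M)) = W.isLocal from
    funext fun M => propext (J.isSheaf_op_comp_iff_isLocal τ M)]
  have := W.isRightAdjoint_ι_isLocal_of_isLocallyPresentable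
  let : Reflective W.isLocal.ι := ⟨_, Adjunction.ofIsRightAdjoint _⟩
  exact ⟨fun _ _ => ObjectProperty.IsClosedUnderLimitsOfShape.closedUnderLimitsOfShape,
    ⟨fun _ _ => inferInstance⟩, ⟨⟨inferInstance⟩⟩, hasColimits_of_reflective W.isLocal.ι⟩
end

section
/- Let C be a small category equipped with a subcanonical Grothendieck topology J, T a small category, and τ : C ⥤ T a functor which is subcanonical in the sense that for every object t of T the presheaf c ↦ Hom_T(τ c, t) on C is a J-sheaf. Let F : Sh(C,J) ⥤ Mod^T be a left adjoint to the forgetful functor U : Mod^T ⥤ Sh(C,J), M ↦ (c ↦ M(τ c)). Then for every object c of C there is an isomorphism of Linton models F(y c) ≅ Hom_T(τ(−), τ c), natural in c, where y : C → Sh(C,J) is the Yoneda embedding (landing in sheaves since J is subcanonical). In other words, the restriction of the free model functor F along the Yoneda embedding is isomorphic to the composite of τ with the representable-model functor. -/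
/-!
For a Linton model `M`, the adjunction and the Yoneda lemma for sheaves give
`Hom(F (y c), M) ≃ Hom(y c, U M) ≃ M (τ c)`, while the Yoneda lemma in `Psh(T)` and fullness of
`Mod^T ⊆ Psh(T)` give `Hom(Hom_T(−, τ c), M) ≃ M (τ c)`. Both bijections are natural in `c` and
`M`, so `F (y c)` and `Hom_T(−, τ c)` corepresent the same functor, naturally in `c`; since
`coyoneda` is fully faithful, the two functors `C ⥤ Mod^T` are isomorphic.
-/

open CategoryTheory

universe u

variable {C : Type u} [SmallCategory C] (J : GrothendieckTopology C)
variable {T : Type u} [SmallCategory T] (τ : C ⥤ T)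

/-- The forgetful functor from Linton models of `τ : C ⥤ T` to `J`-sheaves on `C`,
sending a model `M` to the sheaf `c ↦ M (τ c)`. -/
def lintonForget :
    ObjectProperty.FullSubcategory (fun M : Tᵒᵖ ⥤ Type u => Presieve.IsSheaf J (τ.op ⋙ M)) ⥤
      Sheaf J (Type u) where
  obj M := ⟨τ.op ⋙ M.obj, (isSheaf_iff_isSheaf_of_type J (τ.op ⋙ M.obj)).mpr M.property⟩
  map f := ⟨Functor.whiskerLeft τ.op f.hom⟩

universe v u₁ u₂ u₃

open Functor

namespace CategoryTheory

def Functor.FullyFaithful.compCoyonedaCompWhiskeringLeft {D : Type u₁} {E : Type u₂}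
    [Category.{v} D] [Category.{v} E] {i : D ⥤ E} (hi : i.FullyFaithful) :
    i.op ⋙ coyoneda ⋙ (whiskeringLeft _ _ _).obj i ≅ coyoneda :=
  isoWhiskerLeft _ (isoWhiskerRight uliftCoyonedaIsoCoyoneda.{v}.symm _) ≪≫
    hi.compUliftCoyonedaCompWhiskeringLeft ≪≫ uliftCoyonedaIsoCoyoneda

def Adjunction.compIsoOfCoyonedaIso {B : Type u₃} [Category B] {D : Type u₁} {E : Type u₂}
    [Category.{v} D] [Category.{v} E] {F : E ⥤ D} {G : D ⥤ E} (adj : F ⊣ G)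
    {K : B ⥤ E} {L : B ⥤ D}
    (e : K.op ⋙ coyoneda ⋙ (whiskeringLeft _ _ _).obj G ≅ L.op ⋙ coyoneda) : K ⋙ F ≅ L :=
  (NatIso.removeOp ((Coyoneda.fullyFaithful.whiskeringRight Bᵒᵖ).preimageIso
    (Functor.associator K.op F.op coyoneda ≪≫ isoWhiskerLeft K.op adj.compCoyonedaIso ≪≫ e :
      (K ⋙ F).op ⋙ coyoneda ≅ L.op ⋙ coyoneda))).symm

def GrothendieckTopology.curriedYonedaLemma [J.Subcanonical] :
    J.yoneda.op ⋙ coyoneda ≅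
      evaluation Cᵒᵖ (Type u) ⋙ (whiskeringLeft _ _ _).obj (sheafToPresheaf J (Type u)) :=
  isoWhiskerLeft _ (fullyFaithfulSheafToPresheaf J _).compCoyonedaCompWhiskeringLeft.symm ≪≫
    (Functor.associator _ _ _).symm ≪≫
    isoWhiskerRight (NatIso.op J.yonedaCompSheafToPresheaf.symm) _ ≪≫
    (Functor.associator _ _ _).symm ≪≫ isoWhiskerRight CategoryTheory.curriedYonedaLemma _

end CategoryTheory

def isLintonModel : ObjectProperty (Tᵒᵖ ⥤ Type u) := fun M => Presieve.IsSheaf J (τ.op ⋙ M)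

def representableLintonModel (hτ : ∀ t : T, Presieve.IsSheaf J (τ.op ⋙ yoneda.obj t)) :
    T ⥤ (isLintonModel J τ).FullSubcategory :=
  ObjectProperty.lift _ yoneda hτ

def representableLintonModelOpCompCoyoneda
    (hτ : ∀ t : T, Presieve.IsSheaf J (τ.op ⋙ yoneda.obj t)) :
    (representableLintonModel J τ hτ).op ⋙ coyoneda ≅
      evaluation Tᵒᵖ (Type u) ⋙ (whiskeringLeft _ _ _).obj (isLintonModel J τ).ι :=
  isoWhiskerLeft _ (ObjectProperty.fullyFaithfulι _).compCoyonedaCompWhiskeringLeft.symm ≪≫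
    (Functor.associator _ _ _).symm ≪≫ (Functor.associator _ _ _).symm ≪≫
    isoWhiskerRight curriedYonedaLemma _

def yonedaOpCompCoyonedaCompLintonForget [J.Subcanonical] :
    J.yoneda.op ⋙ coyoneda ⋙ (whiskeringLeft _ _ _).obj (lintonForget J τ) ≅
      τ.op ⋙ evaluation Tᵒᵖ (Type u) ⋙ (whiskeringLeft _ _ _).obj (isLintonModel J τ).ι :=
  (Functor.associator _ _ _).symm ≪≫
    isoWhiskerRight J.curriedYonedaLemma ((whiskeringLeft _ _ _).obj (lintonForget J τ)) ≪≫
    -- `lintonForget J τ ⋙ sheafToPresheaf J _` is `M ↦ τ.op ⋙ M.obj` on the nose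
    Iso.refl _

/-- Let `(C, J)` be a site with `J` subcanonical and `τ : C ⥤ T` a
subcanonical Linton theory (each presheaf `c ↦ Hom_T (τ c, t)` on `C` is a `J`-sheaf).
For any left adjoint `F` of the forgetful functor `U : Mod^T ⥤ Sh(C, J)`, the composite
of the Yoneda embedding `y : C ⥤ Sh(C, J)` with `F` is naturally isomorphic to the
functor sending `c` to the representable Linton model `Hom_T (τ (−), τ c)`. -/
theorem free_model_of_representable [J.Subcanonical]
    (hτ : ∀ t : T, Presieve.IsSheaf J (τ.op ⋙ yoneda.obj t))
    (F : Sheaf J (Type u) ⥤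
      ObjectProperty.FullSubcategory (fun M : Tᵒᵖ ⥤ Type u => Presieve.IsSheaf J (τ.op ⋙ M)))
    (adj : F ⊣ lintonForget J τ) :
    Nonempty (J.yoneda ⋙ F ≅
      ObjectProperty.lift (fun M : Tᵒᵖ ⥤ Type u => Presieve.IsSheaf J (τ.op ⋙ M))
        (τ ⋙ yoneda) (fun c => hτ (τ.obj c))) :=
  ⟨adj.compIsoOfCoyonedaIso (yonedaOpCompCoyonedaCompLintonForget J τ ≪≫
    isoWhiskerLeft τ.op (representableLintonModelOpCompCoyoneda J τ hτ).symm)⟩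
end

section
/- Let C be a small category with Grothendieck topology J, T a small category, and τ : C ⥤ T a functor. Suppose T carries a symmetric monoidal structure (⊗, e) such that for every object t of T, precomposition with the functor t ⊗ − preserves Linton models: if N is a Linton model then so is the presheaf s ↦ N(t ⊗ s). Then for every presheaf M on T and every Linton model N, the presheaf [M,N] on T defined by [M,N](t) = Nat(M, N(− ⊗ t)) — the set of natural transformations from M to the presheaf s ↦ N(s ⊗ t), with the evident contravariant functoriality in t — is again a Linton model. (In other words, Mod^T is an exponential ideal in Psh(T) for the internal hom of the Day convolution.) -/
/-!
Evaluated at `τ c`, the internal hom is `Nat(M, N(− ⊗ τ c))`, i.e. `Hom(M, −)` applied to the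
presheaf of presheaves `c ↦ N(− ⊗ τ c)`, and each evaluation `c ↦ N(s ⊗ τ c)` of the latter is a
sheaf by hypothesis. A compatible family of natural transformations out of `M` then glues
componentwise, and the glued components are natural because amalgamations are unique.
-/

open CategoryTheory MonoidalCategory

universe u

variable {T : Type u} [SmallCategory T] [MonoidalCategory T]

/-- The internal hom for the Day convolution on presheaves over a monoidal category `T`:
`[M, N] (t) = Nat (M, N (− ⊗ t))`, contravariantly functorial in `t`. -/
@[simps]
def dayHom (M N : Tᵒᵖ ⥤ Type u) : Tᵒᵖ ⥤ Type u where
  obj t := M ⟶ (((curriedTensor T).flip.obj t.unop).op ⋙ N)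
  map f := TypeCat.ofHom fun α => α ≫ Functor.whiskerRight (NatTrans.op ((curriedTensor T).flip.map f.unop)) N

open Opposite

namespace CategoryTheory.Presieve

universe w v₁ v₂ u₁ u₂

variable {C : Type u₁} [Category.{v₁} C] {D : Type u₂} [Category.{v₂} D]

theorem isSheafFor_comp_coyoneda_of_isSheafFor_evaluation {X : C} {R : Presieve X}
    (P : Cᵒᵖ ⥤ D ⥤ Type w) (M : D ⥤ Type w)
    (hP : ∀ d, IsSheafFor (P ⋙ (evaluation D _).obj d) R) :
    IsSheafFor (P ⋙ coyoneda.obj (op M)) R := by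
  intro x hx
  let y (d : D) (m : M.obj d) : FamilyOfElements (P ⋙ (evaluation D _).obj d) R :=
    fun _ f hf => (x f hf).app d m
  have hy (d : D) (m : M.obj d) : (y d m).Compatible :=
    fun _ _ _ g₁ g₂ _ _ h₁ h₂ comm => congr_arg (fun α => α.app d m) (hx g₁ g₂ h₁ h₂ comm)
  choose n hn hn_unique using fun d m => hP d (y d m) (hy d m)
  have naturality (d d' : D) (g : d ⟶ d') (m : M.obj d) :
      (P.obj (op X)).map g (n d m) = n d' (M.map g m) := by
    refine hn_unique d' (M.map g m) _ fun Y f hf => ?_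
    change (P.map f.op).app d' ((P.obj (op X)).map g (n d m)) = (x f hf).app d' (M.map g m)
    rw [NatTrans.naturality_apply, (x f hf).naturality_apply]
    exact congr_arg _ (hn d m f hf)
  refine ⟨{ app d := TypeCat.ofHom (n d), naturality d d' g := ?_ }, fun Y f hf => ?_,
    fun z hz => ?_⟩
  · ext m
    exact (naturality d d' g m).symm
  · refine NatTrans.ext (funext fun d => ConcreteCategory.hom_ext _ _ fun m => ?_)
    exact hn d m f hf
  · refine NatTrans.ext (funext fun d => ConcreteCategory.hom_ext _ _ fun m => ?_)
    exact hn_unique d m _ fun Y f hf => congr_arg (fun α => α.app d m) (hz f hf)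

theorem isSheaf_comp_coyoneda_of_isSheaf_evaluation (J : GrothendieckTopology C)
    (P : Cᵒᵖ ⥤ D ⥤ Type w) (M : D ⥤ Type w)
    (hP : ∀ d, IsSheaf J (P ⋙ (evaluation D _).obj d)) :
    IsSheaf J (P ⋙ coyoneda.obj (op M)) :=
  fun _ R hR => isSheafFor_comp_coyoneda_of_isSheafFor_evaluation P M fun d => hP d R hR

end CategoryTheory.Presieve

/-- `t ↦ (s ↦ N (s ⊗ t))`. -/
def precompTensorRight (N : Tᵒᵖ ⥤ Type u) : Tᵒᵖ ⥤ Tᵒᵖ ⥤ Type u :=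
  (curriedTensor T).flip.op ⋙ Functor.opHom T T ⋙ (Functor.whiskeringRight Tᵒᵖ Tᵒᵖ _).obj N

theorem dayHom_eq (M N : Tᵒᵖ ⥤ Type u) :
    dayHom M N = precompTensorRight N ⋙ coyoneda.obj (op M) :=
  rfl

theorem precompTensorRight_comp_evaluation (N : Tᵒᵖ ⥤ Type u) (s : Tᵒᵖ) :
    precompTensorRight N ⋙ (evaluation Tᵒᵖ _).obj s = ((curriedTensor T).obj s.unop).op ⋙ N :=
  rfl

theorem linton_models_exponential_ideal_general
    {C : Type u} [SmallCategory C] (J : GrothendieckTopology C) (τ : C ⥤ T)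
    (h : ∀ (t : T) (N : Tᵒᵖ ⥤ Type u), Presieve.IsSheaf J (τ.op ⋙ N) →
      Presieve.IsSheaf J (τ.op ⋙ (((curriedTensor T).obj t).op ⋙ N)))
    (M N : Tᵒᵖ ⥤ Type u) (hN : Presieve.IsSheaf J (τ.op ⋙ N)) :
    Presieve.IsSheaf J (τ.op ⋙ dayHom M N) := by
  rw [dayHom_eq]
  refine Presieve.isSheaf_comp_coyoneda_of_isSheaf_evaluation J (τ.op ⋙ precompTensorRight N) M
    fun s => ?_
  simpa only [Functor.assoc, precompTensorRight_comp_evaluation] using h s.unop N hN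

/-- Let `τ : C ⥤ T` be a Linton theory over the site `(C, J)`, and let `T`
carry a symmetric monoidal structure such that precomposing with `t ⊗ −` preserves Linton
models.  Then for any presheaf `M` on `T` and any Linton model `N`, the Day-convolution
internal hom `[M, N]` is again a Linton model: `Mod^T` is an exponential ideal in `Psh(T)`. -/
theorem linton_models_exponential_ideal [SymmetricCategory T]
    {C : Type u} [SmallCategory C] (J : GrothendieckTopology C) (τ : C ⥤ T)
    (h : ∀ (t : T) (N : Tᵒᵖ ⥤ Type u), Presieve.IsSheaf J (τ.op ⋙ N) →
      Presieve.IsSheaf J (τ.op ⋙ (((curriedTensor T).obj t).op ⋙ N)))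
    (M N : Tᵒᵖ ⥤ Type u) (hN : Presieve.IsSheaf J (τ.op ⋙ N)) :
    Presieve.IsSheaf J (τ.op ⋙ dayHom M N) :=
  linton_models_exponential_ideal_general J τ h M N hN
end

section
/- Let V and W be real Banach spaces and let T : V → W be a function such that for every finite Borel measure μ on ℝ and every bounded strongly measurable function c : ℝ → V (i.e., c strongly measurable with ‖c(x)‖ uniformly bounded), the composite T ∘ c : ℝ → W is bounded and strongly measurable, and T(∫ c dμ) = ∫ (T ∘ c) dμ (Bochner integrals). Then T is additive and ℝ-homogeneous, and is bounded on the unit ball of V; consequently T is the underlying function of a continuous ℝ-linear map from V to W. -/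
open MeasureTheory

/-- Let `V`, `W` be real Banach spaces and `T : V → W` a function such
that for every finite Borel measure `μ` on `ℝ` and every bounded strongly measurable curve
`c : ℝ → V`, the composite `T ∘ c` is bounded and strongly measurable and `T` commutes with
the Bochner integral: `T (∫ c dμ) = ∫ (T ∘ c) dμ`.  Then `T` is additive, `ℝ`-homogeneous,
and bounded on the unit ball; consequently it underlies a continuous linear map `V →L[ℝ] W`. -/
theorem linear_of_commutes_with_integration
    {V W : Type*} [NormedAddCommGroup V] [NormedSpace ℝ V] [CompleteSpace V]
    [NormedAddCommGroup W] [NormedSpace ℝ W] [CompleteSpace W]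
    (T : V → W)
    (hT : ∀ μ : Measure ℝ, IsFiniteMeasure μ →
      ∀ c : ℝ → V, StronglyMeasurable c → (∃ K, ∀ x, ‖c x‖ ≤ K) →
        StronglyMeasurable (T ∘ c) ∧ (∃ K', ∀ x, ‖T (c x)‖ ≤ K') ∧
          T (∫ x, c x ∂μ) = ∫ x, T (c x) ∂μ) :
    (∀ u v, T (u + v) = T u + T v) ∧
    (∀ (a : ℝ) (v : V), T (a • v) = a • T v) ∧
    (∃ Cb, ∀ v, ‖v‖ ≤ 1 → ‖T v‖ ≤ Cb) ∧
    ∃ T' : V →L[ℝ] W, ∀ v, T' v = T v := by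
  -- T 0 = 0
  have h0 : T 0 = 0 := by
    obtain ⟨-, -, h⟩ := hT 0 inferInstance (fun _ => 0) stronglyMeasurable_const
      ⟨0, by simp⟩
    simpa using h
  -- additivity
  have hadd : ∀ u v, T (u + v) = T u + T v := by
    intro u v
    set μ : Measure ℝ := Measure.dirac 0 + Measure.dirac 1 with hμ
    set c : ℝ → V := fun x => if x = 0 then u else v with hc
    have hcm : StronglyMeasurable c :=
      StronglyMeasurable.ite (measurableSet_singleton 0) stronglyMeasurable_const
        stronglyMeasurable_const
    have hcb : ∀ x, ‖c x‖ ≤ max ‖u‖ ‖v‖ := by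
      intro x
      by_cases hx : x = 0 <;> simp [hc, hx, le_max_left, le_max_right]
    obtain ⟨hTm, ⟨K', hK'⟩, heq⟩ := hT μ inferInstance c hcm ⟨max ‖u‖ ‖v‖, hcb⟩
    have hint : ∫ x, c x ∂μ = u + v := by
      rw [hμ, integral_add_measure, integral_dirac, integral_dirac]
      · simp [hc]
      · exact (integrable_const (max ‖u‖ ‖v‖)).mono' hcm.aestronglyMeasurable
          (Filter.Eventually.of_forall hcb)
      · exact (integrable_const (max ‖u‖ ‖v‖)).mono' hcm.aestronglyMeasurable
          (Filter.Eventually.of_forall hcb)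
    have hint' : ∫ x, T (c x) ∂μ = T u + T v := by
      rw [hμ, integral_add_measure, integral_dirac, integral_dirac]
      · simp [hc]
      · exact (integrable_const K').mono' hTm.aestronglyMeasurable
          (Filter.Eventually.of_forall hK')
      · exact (integrable_const K').mono' hTm.aestronglyMeasurable
          (Filter.Eventually.of_forall hK')
    rw [← hint', ← heq, hint]
  have hneg : ∀ v, T (-v) = -T v := by
    intro v
    have h := hadd v (-v)
    rw [add_neg_cancel, h0] at h
    exact eq_neg_of_add_eq_zero_right h.symm
  -- scalar multiplication, nonneg case
  have hsmul_nn : ∀ (a : ℝ), 0 ≤ a → ∀ v : V, T (a • v) = a • T v := by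
    intro a ha v
    set μ : Measure ℝ := (ENNReal.ofReal a) • Measure.dirac 0 with hμ
    have hfin : IsFiniteMeasure μ := by
      constructor
      rw [hμ]
      simp [Measure.smul_apply]
    obtain ⟨-, -, heq⟩ := hT μ hfin (fun _ => v) stronglyMeasurable_const
      ⟨‖v‖, fun _ => le_rfl⟩
    rw [hμ] at heq
    rw [integral_smul_measure, integral_smul_measure, integral_dirac, integral_dirac,
      ENNReal.toReal_ofReal ha] at heq
    exact heq
  have hsmul : ∀ (a : ℝ) (v : V), T (a • v) = a • T v := by
    intro a v
    rcases le_or_gt 0 a with ha | ha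
    · exact hsmul_nn a ha v
    · have h1 : T (a • v) = T ((-a) • (-v)) := by rw [smul_neg, neg_smul, neg_neg]
      rw [h1, hsmul_nn (-a) (by linarith) (-v), hneg, smul_neg, neg_smul, neg_neg]
  -- boundedness on the unit ball
  have hbdd : ∃ Cb, ∀ v, ‖v‖ ≤ 1 → ‖T v‖ ≤ Cb := by
    by_contra hcon
    push_neg at hcon
    have hv : ∀ n : ℕ, ∃ v : V, ‖v‖ ≤ 1 ∧ (n : ℝ) < ‖T v‖ := by
      intro n
      exact hcon n
    choose v hv1 hv2 using hv
    set c : ℝ → V := fun x => v (Nat.floor x) with hc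
    have hcm : StronglyMeasurable c :=
      (continuous_of_discreteTopology (f := v)).comp_stronglyMeasurable
        Nat.measurable_floor.stronglyMeasurable
    obtain ⟨-, ⟨K', hK'⟩, -⟩ := hT 0 inferInstance c hcm ⟨1, fun x => hv1 _⟩
    have h1 : ‖T (v (Nat.ceil K'))‖ ≤ K' := by
      have := hK' ((Nat.ceil K' : ℕ) : ℝ)
      simpa [hc, Nat.floor_natCast] using this
    have h2 : (↑(Nat.ceil K') : ℝ) < ‖T (v (Nat.ceil K'))‖ := hv2 _
    have h3 : K' ≤ (Nat.ceil K' : ℝ) := Nat.le_ceil K'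
    linarith
  obtain ⟨Cb, hCb⟩ := hbdd
  refine ⟨hadd, hsmul, ⟨Cb, hCb⟩, ?_⟩
  have hCb0 : 0 ≤ Cb := by
    have h := hCb 0 (by simp)
    rw [h0, norm_zero] at h
    exact le_trans le_rfl h
  set f : V →ₗ[ℝ] W :=
    { toFun := T, map_add' := hadd, map_smul' := fun a v => hsmul a v }
  refine ⟨LinearMap.mkContinuous f Cb ?_, fun v => rfl⟩
  intro v
  rcases eq_or_ne v 0 with rfl | hv
  · simp [f, h0]
  · have hn : (0:ℝ) < ‖v‖ := norm_pos_iff.mpr hv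
    have : T v = ‖v‖ • T (‖v‖⁻¹ • v) := by
      rw [← hsmul, smul_smul, mul_inv_cancel₀ hn.ne', one_smul]
    calc ‖f v‖ = ‖v‖ * ‖T (‖v‖⁻¹ • v)‖ := by
          simp only [f, LinearMap.coe_mk, AddHom.coe_mk]
          rw [this, norm_smul, Real.norm_eq_abs, abs_of_pos hn]
      _ ≤ ‖v‖ * Cb := by
          refine mul_le_mul_of_nonneg_left (hCb _ ?_) hn.le
          rw [norm_smul, norm_inv, norm_norm, inv_mul_cancel₀ hn.ne']
      _ = Cb * ‖v‖ := mul_comm _ _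
end
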